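/- arXiv:2002.09459 — 7 statements merged into one kernel-verified Lean document; each statement's English description precedes it below -/
import Mathlib

section
/- Suppose u, w, u', w' are boxes in ℤ⁴↑ such that (u, w), (u, w'), and (u', w) all cross horizontally, and moreover u ∩ u' ≠ ∅ and w ∩ w' ≠ ∅ (as subsets of ℤ²). Then u' ∩ w' ≠ ∅. -/
/-- `SE x y` means `x ↘ y`: `x₁ ≤ y₁` and `x₂ ≥ y₂`. -/
def SE (x y : ℤ × ℤ) : Prop := x.1 ≤ y.1 ∧ y.2 ≤ x.2

/-- A point of `ℤ⁴↑`: a pair `(u⁻, u⁺)` with `u⁻ ≤ u⁺` coordinatewise. -/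
def IsBox (u : (ℤ × ℤ) × (ℤ × ℤ)) : Prop := u.1.1 ≤ u.2.1 ∧ u.1.2 ≤ u.2.2

/-- The pair `(u, v)` crosses horizontally: `u⁻ ↘ v⁻` and `v⁺ ↘ u⁺`. -/
def CrossH (u v : (ℤ × ℤ) × (ℤ × ℤ)) : Prop := SE u.1 v.1 ∧ SE v.2 u.2

/-- The pair `(u, v)` crosses vertically: `v⁻ ↘ u⁻` and `u⁺ ↘ v⁺`. -/
def CrossV (u v : (ℤ × ℤ) × (ℤ × ℤ)) : Prop := SE v.1 u.1 ∧ SE u.2 v.2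

/-- The rectangle in `ℤ²` associated to a box. -/
def boxSet (u : (ℤ × ℤ) × (ℤ × ℤ)) : Set (ℤ × ℤ) :=
  {p | u.1.1 ≤ p.1 ∧ p.1 ≤ u.2.1 ∧ u.1.2 ≤ p.2 ∧ p.2 ≤ u.2.2}

/-- If `(u, w)`, `(u, w')`, `(u', w)` all cross horizontally, `u ∩ u' ≠ ∅` and
`w ∩ w' ≠ ∅`, then `u' ∩ w' ≠ ∅`. -/
theorem crossH_chain_inter (u w u' w' : (ℤ × ℤ) × (ℤ × ℤ))
    (hu : IsBox u) (hw : IsBox w) (hu' : IsBox u') (hw' : IsBox w')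
    (h1 : CrossH u w) (h2 : CrossH u w') (h3 : CrossH u' w)
    (huu' : (boxSet u ∩ boxSet u').Nonempty)
    (hww' : (boxSet w ∩ boxSet w').Nonempty) :
    (boxSet u' ∩ boxSet w').Nonempty := by
  obtain ⟨q, hqu, hqu'⟩ := huu'
  obtain ⟨p, hpw, hpw'⟩ := hww'
  simp only [boxSet, Set.mem_setOf_eq] at hqu hqu' hpw hpw'
  obtain ⟨⟨h1a, h1b⟩, ⟨h1c, h1d⟩⟩ := h1
  obtain ⟨⟨h2a, h2b⟩, ⟨h2c, h2d⟩⟩ := h2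
  obtain ⟨⟨h3a, h3b⟩, ⟨h3c, h3d⟩⟩ := h3
  obtain ⟨hu1, hu2⟩ := hu
  obtain ⟨hw1, hw2⟩ := hw
  obtain ⟨hu'1, hu'2⟩ := hu'
  obtain ⟨hw'1, hw'2⟩ := hw'
  refine ⟨(max u'.1.1 w'.1.1, max u'.1.2 w'.1.2), ?_, ?_⟩ <;>
    simp only [boxSet, Set.mem_setOf_eq] <;> omega
end

section
/- Let U and W be sets of boxes in ℤ⁴↑ such that every pair (u, w) ∈ U × W crosses horizontally. Let v be the smallest box containing the union ⊔W of all boxes in W (assume W is nonempty and finite so that v exists). Then for every u ∈ U, the pair (u, v) crosses horizontally. -/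
/-- If every pair in `U × W` crosses horizontally and `v` is the smallest box
containing the union of the boxes of the finite nonempty family `W`, then every
`u ∈ U` crosses `v` horizontally. -/
theorem crossH_hull (U : Set ((ℤ × ℤ) × (ℤ × ℤ))) (W : Finset ((ℤ × ℤ) × (ℤ × ℤ)))
    (hWne : W.Nonempty)
    (hU : ∀ u ∈ U, IsBox u) (hW : ∀ w ∈ W, IsBox w)
    (hcross : ∀ u ∈ U, ∀ w ∈ W, CrossH u w) :
    ∀ u ∈ U, CrossH u
      ((W.inf' hWne fun w => w.1.1, W.inf' hWne fun w => w.1.2),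
       (W.sup' hWne fun w => w.2.1, W.sup' hWne fun w => w.2.2)) := by
  intro u hu
  obtain ⟨w₀, hw₀⟩ := id hWne
  refine ⟨⟨?_, ?_⟩, ⟨?_, ?_⟩⟩
  · exact Finset.le_inf' hWne _ fun w hw => (hcross u hu w hw).1.1
  · exact le_trans (Finset.inf'_le (fun w => w.1.2) hw₀) (hcross u hu w₀ hw₀).1.2
  · exact Finset.sup'_le hWne _ fun w hw => (hcross u hu w hw).2.1
  · exact le_trans (hcross u hu w₀ hw₀).2.2 (Finset.le_sup' (fun w => w.2.2) hw₀)
end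

section
/- Every moon polyomino S ⊆ ℤ² admits a box exhaustion: there is a finite sequence of boxes (u₀ = ∅, u₁, ..., u_k, u_{k+1} = ∅) such that for each i, u_{i+1} is obtained from u_i by either adding a row or deleting a column (where adding a row means u_{i+1} ⊇ u_i with u_{i+1} \ u_i equal to one full horizontal row of u_{i+1}, and deleting a column means u_{i+1} ⊆ u_i with u_i \ u_{i+1} equal to one full vertical column of u_i), and the union of the u_i equals S. -/
/-- The row section of `S` at height `i`. -/
def rowSec (S : Set (ℤ × ℤ)) (i : ℤ) : Set ℤ := {x | (x, i) ∈ S}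

/-- The column section of `S` at horizontal position `i`. -/
def colSec (S : Set (ℤ × ℤ)) (i : ℤ) : Set ℤ := {x | (i, x) ∈ S}

/-- A moon polyomino: a finite subset of `ℤ²` whose row and column sections are
intervals, any two row sections are nested, and any two column sections are nested. -/
def IsMoonPolyomino (S : Set (ℤ × ℤ)) : Prop :=
  S.Finite ∧
  (∀ i, (rowSec S i).OrdConnected) ∧ (∀ i, (colSec S i).OrdConnected) ∧
  (∀ i j, rowSec S i ⊆ rowSec S j ∨ rowSec S j ⊆ rowSec S i) ∧
  (∀ i j, colSec S i ⊆ colSec S j ∨ colSec S j ⊆ colSec S i)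

/-- A box, as a subset of `ℤ²`: a product of two integer intervals, or empty. -/
def IsBoxSet (B : Set (ℤ × ℤ)) : Prop :=
  B = ∅ ∨ ∃ a b : ℤ × ℤ, a.1 ≤ b.1 ∧ a.2 ≤ b.2 ∧
    B = {p : ℤ × ℤ | a.1 ≤ p.1 ∧ p.1 ≤ b.1 ∧ a.2 ≤ p.2 ∧ p.2 ≤ b.2}

/-- `v` is obtained from `u` by adding a row: `u ⊆ v` and `v \ u` is one full
horizontal row of `v`. -/
def AddRow (u v : Set (ℤ × ℤ)) : Prop :=
  u ⊆ v ∧ ∃ j : ℤ, v \ u = {p ∈ v | p.2 = j}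

/-- `v` is obtained from `u` by deleting a column: `v ⊆ u` and `u \ v` is one full
vertical column of `u`. -/
def DelCol (u v : Set (ℤ × ℤ)) : Prop :=
  v ⊆ u ∧ ∃ j : ℤ, u \ v = {p ∈ u | p.1 = j}

/-- A box exhaustion of `S`: a sequence of boxes `u 0 = ∅, u 1, ..., u k, u (k+1) = ∅`
where each step adds a row or deletes a column, whose union is `S`. -/
def IsBoxExhaustion (S : Set (ℤ × ℤ)) (k : ℕ) (u : ℕ → Set (ℤ × ℤ)) : Prop :=
  u 0 = ∅ ∧ u (k + 1) = ∅ ∧ (∀ i ≤ k + 1, IsBoxSet (u i)) ∧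
  (∀ i ≤ k, AddRow (u i) (u (i + 1)) ∨ DelCol (u i) (u (i + 1))) ∧
  (⋃ i ∈ Set.Iic (k + 1), u i) = S

lemma exhaustion_empty : ∃ k u, IsBoxExhaustion (∅ : Set (ℤ × ℤ)) k u := by
  refine ⟨0, fun _ => ∅, rfl, rfl, fun i _ => Or.inl rfl, fun i _ => Or.inl ?_, by simp⟩
  exact ⟨subset_rfl, 0, by ext p; simp⟩

lemma exhaustion_aux (n : ℕ) : ∀ (S : Set (ℤ × ℤ)), S.Finite → S.ncard ≤ n →
    (∀ i, (rowSec S i).OrdConnected) → ∃ k u, IsBoxExhaustion S k u := by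
  induction n with
  | zero =>
    intro S hfin hcard _
    have h0 : S = ∅ := (Set.ncard_eq_zero hfin).mp (Nat.le_zero.mp hcard)
    rw [h0]; exact exhaustion_empty
  | succ n ih =>
    intro S hfin hcard hrow
    rcases Set.eq_empty_or_nonempty S with hS | hS
    · rw [hS]; exact exhaustion_empty
    obtain ⟨⟨x0, j⟩, hx0⟩ := hS
    have hRfin : (rowSec S j).Finite := by
      apply (hfin.image Prod.fst).subset
      intro x hx
      exact ⟨(x, j), hx, rfl⟩
    have hRne : (rowSec S j).Nonempty := ⟨x0, hx0⟩
    set F : Finset ℤ := hRfin.toFinset with hF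
    have hFne : F.Nonempty := by
      rw [hF]; exact Set.Finite.toFinset_nonempty hRfin |>.mpr hRne
    set a : ℤ := F.min' hFne with hadef
    set b : ℤ := F.max' hFne with hbdef
    have ha : a ∈ rowSec S j := hRfin.mem_toFinset.mp (F.min'_mem hFne)
    have hb : b ∈ rowSec S j := hRfin.mem_toFinset.mp (F.max'_mem hFne)
    have hab : a ≤ b := Finset.min'_le F b (hRfin.mem_toFinset.mpr hb)
    have hRicc : rowSec S j = Set.Icc a b := by
      apply Set.Subset.antisymm
      · intro x hx
        have hxF : x ∈ F := hRfin.mem_toFinset.mpr hx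
        exact ⟨Finset.min'_le F x hxF, Finset.le_max' F x hxF⟩
      · exact (hrow j).out ha hb
    set Rset : Set (ℤ × ℤ) := {p : ℤ × ℤ | a ≤ p.1 ∧ p.1 ≤ b ∧ p.2 = j} with hRsetdef
    have hRset_iff : ∀ p : ℤ × ℤ, p ∈ Rset ↔ p ∈ S ∧ p.2 = j := by
      intro p
      constructor
      · rintro ⟨h1, h2, h3⟩
        have : p.1 ∈ rowSec S j := by rw [hRicc]; exact ⟨h1, h2⟩
        have hp : (p.1, j) ∈ S := this
        refine ⟨?_, h3⟩
        rwa [show p = (p.1, j) from Prod.ext rfl h3]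
      · rintro ⟨h1, h2⟩
        have : p.1 ∈ rowSec S j := by
          show (p.1, j) ∈ S
          rwa [show (p.1, j) = p from Prod.ext rfl h2.symm]
        rw [hRicc] at this
        exact ⟨this.1, this.2, h2⟩
    set S' : Set (ℤ × ℤ) := S \ Rset with hS'def
    have hfin' : S'.Finite := hfin.subset Set.diff_subset
    have hrow' : ∀ i, (rowSec S' i).OrdConnected := by
      intro i
      rcases eq_or_ne i j with h | h
      · have : rowSec S' i = ∅ := by
          ext x
          simp only [rowSec, Set.mem_setOf_eq, hS'def, Set.mem_diff, Set.mem_empty_iff_false,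
            iff_false, not_and, not_not]
          intro hx
          rw [hRset_iff]
          exact ⟨hx, h⟩
        rw [this]; exact Set.ordConnected_empty
      · have : rowSec S' i = rowSec S i := by
          ext x
          simp only [rowSec, Set.mem_setOf_eq, hS'def, Set.mem_diff]
          constructor
          · exact fun h' => h'.1
          · intro hx
            refine ⟨hx, ?_⟩
            rw [hRset_iff]
            rintro ⟨-, h2⟩
            exact h h2
        rw [this]; exact hrow i
    have hcard' : S'.ncard ≤ n := by
      have hmem : (x0, j) ∈ Rset := (hRset_iff (x0, j)).mpr ⟨hx0, rfl⟩
      have hss : S' ⊂ S := by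
        constructor
        · exact Set.diff_subset
        · intro hcon
          have := hcon hx0
          rw [hS'def, Set.mem_diff] at this
          exact this.2 hmem
      have := Set.ncard_lt_ncard hss hfin
      omega
    obtain ⟨k', u', h0', hk1', hbox', hstep', huni'⟩ := ih S' hfin' hcard' hrow'
    set m : ℕ := (b - a).toNat + 2 with hmdef
    have hm : (m : ℤ) = b - a + 2 := by
      rw [hmdef]; push_cast; omega
    set run : ℕ → Set (ℤ × ℤ) :=
      fun t => if t = 0 then ∅ else {p : ℤ × ℤ | a + t - 1 ≤ p.1 ∧ p.1 ≤ b ∧ p.2 = j}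
      with hrundef
    have hrun0 : run 0 = ∅ := by rw [hrundef]; simp
    have hrun1 : run 1 = Rset := by
      rw [hrundef, hRsetdef]
      ext p
      simp only [if_neg (one_ne_zero), Set.mem_setOf_eq, Nat.cast_one]
      constructor <;> rintro ⟨h1, h2, h3⟩ <;> exact ⟨by omega, h2, h3⟩
    have hrun_sub : ∀ t, run t ⊆ Rset := by
      intro t
      rcases eq_or_ne t 0 with h | h
      · rw [h, hrun0]; exact Set.empty_subset _
      · rw [hrundef, hRsetdef]
        intro p hp
        simp only [if_neg h, Set.mem_setOf_eq] at hp
        have ht : 1 ≤ (t : ℤ) := by exact_mod_cast Nat.one_le_iff_ne_zero.mpr h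
        exact ⟨by omega, hp.2.1, hp.2.2⟩
    have hrunm : ∀ t, m ≤ t → run t = ∅ := by
      intro t ht
      have ht' : (m : ℤ) ≤ (t : ℤ) := by exact_mod_cast ht
      have htne : t ≠ 0 := by omega
      rw [hrundef]
      ext p
      simp only [if_neg htne, Set.mem_setOf_eq, Set.mem_empty_iff_false, iff_false, not_and]
      intro h1 h2
      omega
    have hrun_box : ∀ t, IsBoxSet (run t) := by
      intro t
      rcases eq_or_ne t 0 with h | h
      · left; rw [h, hrun0]
      · rcases le_or_gt (a + t - 1) b with hle | hlt
        · right
          refine ⟨(a + t - 1, j), (b, j), hle, le_rfl, ?_⟩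
          rw [hrundef]
          ext p
          simp only [if_neg h, Set.mem_setOf_eq]
          constructor
          · rintro ⟨h1, h2, h3⟩; exact ⟨h1, h2, le_of_eq h3.symm, le_of_eq h3⟩
          · rintro ⟨h1, h2, h3, h4⟩; exact ⟨h1, h2, le_antisymm h4 h3⟩
        · left
          rw [hrundef]
          ext p
          simp only [if_neg h, Set.mem_setOf_eq, Set.mem_empty_iff_false, iff_false, not_and]
          intro h1 h2
          omega
    have hadd : AddRow (run 0) (run 1) := by
      rw [hrun0]
      refine ⟨Set.empty_subset _, j, ?_⟩
      rw [Set.diff_empty]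
      ext p
      simp only [Set.mem_setOf_eq, Set.mem_sep_iff]
      constructor
      · intro hp; exact ⟨hp, (hrun_sub 1 hp).2.2⟩
      · exact fun hp => hp.1
    have hdel : ∀ t, 1 ≤ t → DelCol (run t) (run (t + 1)) := by
      intro t ht
      have htne : t ≠ 0 := by omega
      have ht1ne : t + 1 ≠ 0 := by omega
      constructor
      · rw [hrundef]
        intro p hp
        simp only [if_neg ht1ne, Set.mem_setOf_eq] at hp
        simp only [if_neg htne, Set.mem_setOf_eq]
        push_cast at hp ⊢
        exact ⟨by omega, hp.2⟩
      · refine ⟨a + t - 1, ?_⟩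
        rw [hrundef]
        ext p
        simp only [if_neg ht1ne, if_neg htne, Set.mem_diff, Set.mem_setOf_eq, Set.mem_sep_iff]
        push_cast
        constructor
        · rintro ⟨⟨h1, h2, h3⟩, h4⟩
          refine ⟨⟨h1, h2, h3⟩, ?_⟩
          by_contra hne
          exact h4 ⟨by omega, h2, h3⟩
        · rintro ⟨⟨h1, h2, h3⟩, h4⟩
          refine ⟨⟨h1, h2, h3⟩, ?_⟩
          rintro ⟨h5, -, -⟩
          omega
    set u : ℕ → Set (ℤ × ℤ) := fun i => if i < m then run i else u' (i - m) with hudef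
    have hum : 2 ≤ m := by omega
    have hu_run : ∀ i, i < m → u i = run i := by
      intro i hi; rw [hudef]; simp [hi]
    have hu_tail : ∀ i, m ≤ i → u i = u' (i - m) := by
      intro i hi; rw [hudef]; simp [Nat.not_lt.mpr hi]
    have hu_succ_run : ∀ i, i < m → u (i + 1) = run (i + 1) := by
      intro i hi
      rcases lt_or_ge (i + 1) m with h | h
      · exact hu_run _ h
      · have hieq : i + 1 = m := by omega
        rw [hu_tail _ h, hieq, Nat.sub_self, h0', hrunm m le_rfl]
    refine ⟨m + k', u, ?_, ?_, ?_, ?_, ?_⟩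
    · rw [hu_run 0 (by omega), hrun0]
    · rw [hu_tail _ (by omega), show m + k' + 1 - m = k' + 1 by omega, hk1']
    · intro i hi
      rcases lt_or_ge i m with h | h
      · rw [hu_run i h]; exact hrun_box i
      · rw [hu_tail i h]; exact hbox' _ (by omega)
    · intro i hi
      rcases lt_or_ge i m with h | h
      · rw [hu_run i h, hu_succ_run i h]
        rcases eq_or_ne i 0 with h0 | h0
        · left; rw [h0]; exact hadd
        · right; exact hdel i (Nat.one_le_iff_ne_zero.mpr h0)
      · rw [hu_tail i h, hu_tail (i + 1) (by omega),
          show i + 1 - m = i - m + 1 by omega]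
        exact hstep' (i - m) (by omega)
    · ext p
      simp only [Set.mem_iUnion, Set.mem_Iic, exists_prop]
      constructor
      · rintro ⟨i, hi, hp⟩
        rcases lt_or_ge i m with h | h
        · rw [hu_run i h] at hp
          have := hrun_sub i hp
          exact ((hRset_iff p).mp this).1
        · rw [hu_tail i h] at hp
          have hp' : p ∈ ⋃ i' ∈ Set.Iic (k' + 1), u' i' := by
            simp only [Set.mem_iUnion, Set.mem_Iic, exists_prop]
            exact ⟨i - m, by omega, hp⟩
          rw [huni'] at hp'
          exact hp'.1
      · intro hp
        rcases eq_or_ne p.2 j with h | h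
        · refine ⟨1, by omega, ?_⟩
          rw [hu_run 1 (by omega), hrun1]
          exact (hRset_iff p).mpr ⟨hp, h⟩
        · have hp' : p ∈ S' := by
            rw [hS'def, Set.mem_diff]
            refine ⟨hp, ?_⟩
            rw [hRset_iff]
            rintro ⟨-, h2⟩
            exact h h2
          rw [← huni'] at hp'
          simp only [Set.mem_iUnion, Set.mem_Iic, exists_prop] at hp'
          obtain ⟨i', hi', hpi⟩ := hp'
          refine ⟨m + i', by omega, ?_⟩
          rw [hu_tail _ (by omega), show m + i' - m = i' by omega]
          exact hpi

/-- Every moon polyomino admits a box exhaustion. -/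
theorem moonPolyomino_boxExhaustion (S : Set (ℤ × ℤ)) (hS : IsMoonPolyomino S) :
    ∃ (k : ℕ) (u : ℕ → Set (ℤ × ℤ)), IsBoxExhaustion S k u :=
  exhaustion_aux S.ncard S hS.1 le_rfl hS.2.1
end

section
/- In a moon polyomino S, any two maximal boxes cross: if u and v are boxes contained in S that are maximal with respect to inclusion among boxes contained in S, then the pair (u, v) crosses horizontally or vertically. -/
lemma interval_of_finite (T : Set ℤ) (hfin : T.Finite) (hconn : T.OrdConnected)
    (hne : T.Nonempty) : ∃ a b, a ≤ b ∧ T = Set.Icc a b := by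
  classical
  have hne' : hfin.toFinset.Nonempty := by simpa using hne
  refine ⟨hfin.toFinset.min' hne', hfin.toFinset.max' hne', ?_, ?_⟩
  · exact Finset.min'_le _ _ (Finset.max'_mem _ _)
  · apply Set.Subset.antisymm
    · intro x hx
      have hx' : x ∈ hfin.toFinset := hfin.mem_toFinset.2 hx
      exact ⟨hfin.toFinset.min'_le x hx', hfin.toFinset.le_max' x hx'⟩
    · have h1 : hfin.toFinset.min' hne' ∈ T := hfin.mem_toFinset.1 (hfin.toFinset.min'_mem hne')
      have h2 : hfin.toFinset.max' hne' ∈ T := hfin.mem_toFinset.1 (hfin.toFinset.max'_mem hne')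
      exact hconn.out h1 h2

/-- Key lemma: the x-interval of a maximal box is exactly some row section. -/
lemma key_row (S : Set (ℤ × ℤ)) (hfin : S.Finite)
    (hconn : ∀ i, (rowSec S i).OrdConnected)
    (hnest : ∀ i j, rowSec S i ⊆ rowSec S j ∨ rowSec S j ⊆ rowSec S i)
    (u : (ℤ × ℤ) × (ℤ × ℤ)) (hu : IsBox u) (huS : boxSet u ⊆ S)
    (humax : ∀ w, IsBox w → boxSet u ⊆ boxSet w → boxSet w ⊆ S → boxSet w = boxSet u) :
    ∃ i, rowSec S i = Set.Icc u.1.1 u.2.1 := by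
  classical
  obtain ⟨⟨a, c⟩, ⟨b, d⟩⟩ := u
  obtain ⟨hab, hcd⟩ := hu
  simp only at hab hcd ⊢
  have hboxmem : ∀ x i, a ≤ x → x ≤ b → c ≤ i → i ≤ d → ((x, i) : ℤ × ℤ) ∈ boxSet ((a,c),(b,d)) := by
    intro x i h1 h2 h3 h4; exact ⟨h1, h2, h3, h4⟩
  have hrowfin : ∀ i, (rowSec S i).Finite := fun i =>
    (hfin.image Prod.fst).subset (fun x hx => ⟨(x, i), hx, rfl⟩)
  obtain ⟨i0, hi0mem, hi0min⟩ :=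
    Finset.exists_min_image (Finset.Icc c d) (fun i => (rowSec S i).ncard)
      ⟨c, Finset.mem_Icc.mpr ⟨le_refl c, hcd⟩⟩
  rw [Finset.mem_Icc] at hi0mem
  have hsubset : ∀ i, c ≤ i → i ≤ d → rowSec S i0 ⊆ rowSec S i := by
    intro i hci hid
    rcases hnest i0 i with h | h
    · exact h
    · exact (Set.eq_of_subset_of_ncard_le h
        (hi0min i (Finset.mem_Icc.mpr ⟨hci, hid⟩)) (hrowfin i0)).symm.subset
  have habsub : Set.Icc a b ⊆ rowSec S i0 := fun x hx =>
    huS (hboxmem x i0 hx.1 hx.2 hi0mem.1 hi0mem.2)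
  obtain ⟨a0, b0, ha0b0, hIcc⟩ := interval_of_finite (rowSec S i0) (hrowfin i0) (hconn i0)
    ⟨a, habsub ⟨le_refl a, hab⟩⟩
  -- endpoints of the big interval
  have ha0a : a0 ≤ a := by
    have := habsub ⟨le_refl a, hab⟩; rw [hIcc] at this; exact this.1
  have hbb0 : b ≤ b0 := by
    have := habsub ⟨hab, le_refl b⟩; rw [hIcc] at this; exact this.2
  -- the enlarged box
  set w : (ℤ × ℤ) × (ℤ × ℤ) := ((a0, c), (b0, d)) with hw
  have hwbox : IsBox w := ⟨ha0b0, hcd⟩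
  have huw : boxSet ((a,c),(b,d)) ⊆ boxSet w := by
    intro p hp
    exact ⟨le_trans ha0a hp.1, le_trans hp.2.1 hbb0, hp.2.2.1, hp.2.2.2⟩
  have hwS : boxSet w ⊆ S := by
    rintro ⟨x, i⟩ hp
    have hx : x ∈ rowSec S i0 := by rw [hIcc]; exact ⟨hp.1, hp.2.1⟩
    exact hsubset i hp.2.2.1 hp.2.2.2 hx
  have heq := humax w hwbox huw hwS
  -- deduce a0 = a and b0 = b
  have hmem1 : ((a0, c) : ℤ × ℤ) ∈ boxSet w := ⟨le_refl a0, ha0b0, le_refl c, hcd⟩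
  have hmem2 : ((b0, c) : ℤ × ℤ) ∈ boxSet w := ⟨ha0b0, le_refl b0, le_refl c, hcd⟩
  rw [heq] at hmem1 hmem2
  have ha0 : a0 = a := le_antisymm ha0a hmem1.1
  have hb0 : b0 = b := le_antisymm hmem2.2.1 hbb0
  refine ⟨i0, ?_⟩
  rw [hIcc, ha0, hb0]

def swapBox (w : (ℤ × ℤ) × (ℤ × ℤ)) : (ℤ × ℤ) × (ℤ × ℤ) :=
  ((w.1.2, w.1.1), (w.2.2, w.2.1))

lemma boxSet_swapBox (w : (ℤ × ℤ) × (ℤ × ℤ)) :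
    boxSet (swapBox w) = Prod.swap ⁻¹' boxSet w := by
  ext ⟨x, y⟩
  simp only [boxSet, swapBox, Set.mem_preimage, Set.mem_setOf_eq, Prod.swap]
  tauto

/-- Column version, by swapping coordinates. -/
lemma key_col (S : Set (ℤ × ℤ)) (hfin : S.Finite)
    (hconn : ∀ i, (colSec S i).OrdConnected)
    (hnest : ∀ i j, colSec S i ⊆ colSec S j ∨ colSec S j ⊆ colSec S i)
    (u : (ℤ × ℤ) × (ℤ × ℤ)) (hu : IsBox u) (huS : boxSet u ⊆ S)
    (humax : ∀ w, IsBox w → boxSet u ⊆ boxSet w → boxSet w ⊆ S → boxSet w = boxSet u) :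
    ∃ i, colSec S i = Set.Icc u.1.2 u.2.2 := by
  set S' : Set (ℤ × ℤ) := Prod.swap ⁻¹' S with hS'
  have hrowcol : ∀ i, rowSec S' i = colSec S i := fun i => rfl
  have hfin' : S'.Finite := hfin.preimage (Function.Injective.injOn Prod.swap_injective)
  have h := key_row S' hfin' (fun i => by rw [hrowcol]; exact hconn i)
    (fun i j => by rw [hrowcol, hrowcol]; exact hnest i j) (swapBox u)
    ⟨hu.2, hu.1⟩
    (by rw [boxSet_swapBox]; intro p hp; exact huS hp)
    ?_
  · obtain ⟨i, hi⟩ := h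
    exact ⟨i, by rw [← hrowcol]; exact hi⟩
  · intro w hwbox hsub hwS
    have h1 : boxSet u ⊆ boxSet (swapBox w) := by
      rw [boxSet_swapBox]
      intro p hp
      have : Prod.swap p ∈ boxSet (swapBox u) := by
        rw [boxSet_swapBox]; simpa using hp
      exact hsub this
    have h2 : boxSet (swapBox w) ⊆ S := by
      rw [boxSet_swapBox]
      intro p hp
      exact hwS hp
    have := humax (swapBox w) ⟨hwbox.2, hwbox.1⟩ h1 h2
    rw [boxSet_swapBox] at this
    rw [boxSet_swapBox, ← this]
    ext p
    simp

/-- In a moon polyomino, any two maximal boxes cross (horizontally or vertically). -/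
theorem moonPolyomino_maximal_boxes_cross (S : Set (ℤ × ℤ)) (hS : IsMoonPolyomino S)
    (u v : (ℤ × ℤ) × (ℤ × ℤ)) (hu : IsBox u) (hv : IsBox v)
    (huS : boxSet u ⊆ S) (hvS : boxSet v ⊆ S)
    (humax : ∀ w, IsBox w → boxSet u ⊆ boxSet w → boxSet w ⊆ S → boxSet w = boxSet u)
    (hvmax : ∀ w, IsBox w → boxSet v ⊆ boxSet w → boxSet w ⊆ S → boxSet w = boxSet v) :
    CrossH u v ∨ CrossV u v := by
  obtain ⟨hfin, hrconn, hcconn, hrnest, hcnest⟩ := hS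
  obtain ⟨i, hiu⟩ := key_row S hfin hrconn hrnest u hu huS humax
  obtain ⟨i', hiv⟩ := key_row S hfin hrconn hrnest v hv hvS hvmax
  obtain ⟨j, hju⟩ := key_col S hfin hcconn hcnest u hu huS humax
  obtain ⟨j', hjv⟩ := key_col S hfin hcconn hcnest v hv hvS hvmax
  have hx : (v.1.1 ≤ u.1.1 ∧ u.2.1 ≤ v.2.1) ∨ (u.1.1 ≤ v.1.1 ∧ v.2.1 ≤ u.2.1) := by
    rcases hrnest i i' with h | h
    · rw [hiu, hiv] at h
      exact Or.inl ((Set.Icc_subset_Icc_iff hu.1).mp h)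
    · rw [hiu, hiv] at h
      exact Or.inr ((Set.Icc_subset_Icc_iff hv.1).mp h)
  have hy : (v.1.2 ≤ u.1.2 ∧ u.2.2 ≤ v.2.2) ∨ (u.1.2 ≤ v.1.2 ∧ v.2.2 ≤ u.2.2) := by
    rcases hcnest j j' with h | h
    · rw [hju, hjv] at h
      exact Or.inl ((Set.Icc_subset_Icc_iff hu.2).mp h)
    · rw [hju, hjv] at h
      exact Or.inr ((Set.Icc_subset_Icc_iff hv.2).mp h)
  rcases hx with hx | hx <;> rcases hy with hy | hy
  · -- boxSet u ⊆ boxSet v; maximality forces equality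
    have hsub : boxSet u ⊆ boxSet v := by
      intro p hp
      exact ⟨le_trans hx.1 hp.1, le_trans hp.2.1 hx.2,
        le_trans hy.1 hp.2.2.1, le_trans hp.2.2.2 hy.2⟩
    have heq := humax v hv hsub hvS
    have hm1 : v.1 ∈ boxSet u := by
      rw [← heq]; exact ⟨le_refl _, hv.1, le_refl _, hv.2⟩
    have hm2 : v.2 ∈ boxSet u := by
      rw [← heq]; exact ⟨hv.1, le_refl _, hv.2, le_refl _⟩
    exact Or.inl ⟨⟨hm1.1, hy.1⟩, ⟨hm2.2.1, hy.2⟩⟩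
  · exact Or.inr ⟨⟨hx.1, hy.1⟩, ⟨hx.2, hy.2⟩⟩
  · exact Or.inl ⟨⟨hx.1, hy.1⟩, ⟨hx.2, hy.2⟩⟩
  · have hsub : boxSet v ⊆ boxSet u := by
      intro p hp
      exact ⟨le_trans hx.1 hp.1, le_trans hp.2.1 hx.2,
        le_trans hy.1 hp.2.2.1, le_trans hp.2.2.2 hy.2⟩
    have heq := hvmax u hu hsub huS
    have hm1 : u.1 ∈ boxSet v := by
      rw [← heq]; exact ⟨le_refl _, hu.1, le_refl _, hu.2⟩
    have hm2 : u.2 ∈ boxSet v := by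
      rw [← heq]; exact ⟨hu.1, le_refl _, hu.2, le_refl _⟩
    exact Or.inl ⟨⟨hx.1, hm1.2.2.1⟩, ⟨hx.2, hm2.2.2.2⟩⟩
end

section
/- Let g : ℝ → ℝ be a nonincreasing function and let Γ(g) = {(x, y) ∈ ℝ² : lim_{t→x⁻} g(t) ≥ y ≥ lim_{t→x⁺} g(t)} be its graph completed by vertical segments at discontinuities. Then there exists a unique function m = (m₁, m₂) : ℝ → ℝ² satisfying: (1) m(ℝ) = Γ(g); (2) m₁(0) = m₂(0) and m₁(t) > m₂(t) for all t > 0; (3) for all x, y ∈ ℝ, ‖m(x) − m(y)‖₁ = |x − y|, where ‖·‖₁ is the L¹ norm on ℝ². -/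
/-- The completed graph `Γ(g)` of a nonincreasing function `g`: the graph of `g`
connected by vertical segments at all discontinuities. -/
def completedGraph (g : ℝ → ℝ) : Set (ℝ × ℝ) :=
  {p : ℝ × ℝ | Function.rightLim g p.1 ≤ p.2 ∧ p.2 ≤ Function.leftLim g p.1}

open Filter Topology Function

private lemma abs_add_abs_of_mul_nonpos {a b : ℝ} (h : a * b ≤ 0) : |a| + |b| = |a - b| := by
  rcases le_total 0 a with ha | ha <;> rcases le_total 0 b with hb | hb
  · rcases mul_eq_zero.1 (le_antisymm h (mul_nonneg ha hb)) with rfl | rfl <;>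
      simp [abs_sub_comm]
  · rw [abs_of_nonneg ha, abs_of_nonpos hb, abs_of_nonneg (by linarith)]; ring
  · rw [abs_of_nonpos ha, abs_of_nonneg hb, abs_of_nonpos (by linarith)]; ring
  · rcases mul_eq_zero.1 (le_antisymm h (by nlinarith)) with rfl | rfl <;>
      simp [abs_sub_comm]

/-- Any two points of the completed graph have coordinate differences of opposite signs. -/
private lemma key_opp {g : ℝ → ℝ} (hg : Antitone g) {p q : ℝ × ℝ}
    (hp : p ∈ completedGraph g) (hq : q ∈ completedGraph g) :
    (p.1 - q.1) * (p.2 - q.2) ≤ 0 := by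
  rcases lt_trichotomy p.1 q.1 with h | h | h
  · have h2 : q.2 ≤ p.2 := le_trans (le_trans hq.2 (hg.leftLim_le_rightLim h)) hp.1
    nlinarith
  · simp [h]
  · have h2 : p.2 ≤ q.2 := le_trans (le_trans hp.2 (hg.leftLim_le_rightLim h)) hq.1
    nlinarith

/-- The point of the completed graph with a given value of `x - y` is unique. -/
private lemma key_unique {g : ℝ → ℝ} (hg : Antitone g) {p q : ℝ × ℝ}
    (hp : p ∈ completedGraph g) (hq : q ∈ completedGraph g)
    (h : p.1 - p.2 = q.1 - q.2) : p = q := by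
  have h0 := key_opp hg hp hq
  have h1 : p.1 - q.1 = p.2 - q.2 := by linarith
  have h2 : p.1 = q.1 := by nlinarith
  have h3 : p.2 = q.2 := by linarith
  exact Prod.ext h2 h3

noncomputable def paramX (g : ℝ → ℝ) (t : ℝ) : ℝ := sSup {x : ℝ | x - g x ≤ t}

private lemma paramX_mem {g : ℝ → ℝ} (hg : Antitone g) (t : ℝ) :
    (paramX g t, paramX g t - t) ∈ completedGraph g := by
  set S : Set ℝ := {x : ℝ | x - g x ≤ t} with hS
  have hne : S.Nonempty := by
    refine ⟨min 0 (t + g 0), ?_⟩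
    have h1 : min 0 (t + g 0) ≤ 0 := min_le_left _ _
    have h2 : g 0 ≤ g (min 0 (t + g 0)) := hg h1
    have h3 : min 0 (t + g 0) ≤ t + g 0 := min_le_right _ _
    simp only [hS, Set.mem_setOf_eq]; linarith
  have hbdd : BddAbove S := by
    refine ⟨max 0 (t + g 0), fun x hx => ?_⟩
    simp only [hS, Set.mem_setOf_eq] at hx
    rcases le_total x 0 with h | h
    · exact le_trans h (le_max_left _ _)
    · have : g x ≤ g 0 := hg h
      have : x ≤ t + g 0 := by linarith
      exact le_trans this (le_max_right _ _)
  set X := sSup S with hX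
  have h1 : ∀ x < X, x - g x ≤ t := by
    intro x hx
    obtain ⟨x', hx', hlt⟩ := exists_lt_of_lt_csSup hne hx
    have := hg hlt.le
    simp only [hS, Set.mem_setOf_eq] at hx'
    linarith
  have h2 : ∀ x, X < x → t < x - g x := by
    intro x hx
    by_contra hc
    push_neg at hc
    exact absurd (le_csSup hbdd (by simpa [hS] using hc)) (not_le.2 hx)
  constructor
  · -- rightLim g X ≤ X - t
    have htend : Tendsto (fun x => g x - x) (𝓝[>] X) (𝓝 (rightLim g X - X)) :=
      (hg.tendsto_rightLim X).sub (tendsto_id.mono_left nhdsWithin_le_nhds)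
    have hev : ∀ᶠ x in 𝓝[>] X, g x - x ≤ -t := by
      refine Eventually.filter_mono inf_le_right (eventually_principal.2 fun x hx => ?_)
      have := h2 x hx
      linarith
    have := le_of_tendsto htend hev
    show rightLim g X ≤ X - t
    linarith
  · -- X - t ≤ leftLim g X
    have htend : Tendsto (fun x => g x - x) (𝓝[<] X) (𝓝 (leftLim g X - X)) :=
      (hg.tendsto_leftLim X).sub (tendsto_id.mono_left nhdsWithin_le_nhds)
    have hev : ∀ᶠ x in 𝓝[<] X, -t ≤ g x - x := by
      refine Eventually.filter_mono inf_le_right (eventually_principal.2 fun x hx => ?_)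
      have := h1 x hx
      linarith
    have := ge_of_tendsto htend hev
    show X - t ≤ leftLim g X
    linarith

/-- For any nonincreasing `g : ℝ → ℝ` there is a unique parametrization
`m = (m₁, m₂) : ℝ → ℝ²` of `Γ(g)` with `m(ℝ) = Γ(g)`, `m₁(0) = m₂(0)`,
`m₁(t) > m₂(t)` for `t > 0`, and `‖m(x) − m(y)‖₁ = |x − y|` for all `x, y`. -/
theorem completedGraph_unique_param (g : ℝ → ℝ) (hg : Antitone g) :
    ∃! m : ℝ → ℝ × ℝ,
      Set.range m = completedGraph g ∧
      ((m 0).1 = (m 0).2 ∧ ∀ t : ℝ, 0 < t → (m t).2 < (m t).1) ∧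
      ∀ x y : ℝ, |(m x).1 - (m y).1| + |(m x).2 - (m y).2| = |x - y| := by
  set m : ℝ → ℝ × ℝ := fun t => (paramX g t, paramX g t - t) with hm
  have hmem : ∀ t, m t ∈ completedGraph g := fun t => paramX_mem hg t
  refine ⟨m, ⟨?_, ⟨by simp [hm], fun t ht => by simp [hm]; linarith⟩, ?_⟩, ?_⟩
  · -- range
    ext p
    constructor
    · rintro ⟨t, rfl⟩; exact hmem t
    · intro hp
      exact ⟨p.1 - p.2, key_unique hg (hmem _) hp (by simp [hm])⟩
  · -- isometry
    intro x y
    have h := key_opp hg (hmem x) (hmem y)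
    have := abs_add_abs_of_mul_nonpos h
    rw [this]
    congr 1
    simp only [hm]
    ring
  · -- uniqueness
    rintro m' ⟨hrange, ⟨h0, hpos⟩, hiso⟩
    have hmem' : ∀ s, m' s ∈ completedGraph g := by
      intro s; rw [← hrange]; exact Set.mem_range_self s
    set D : ℝ → ℝ := fun s => (m' s).1 - (m' s).2 with hD
    have hDiso : ∀ x y, |D x - D y| = |x - y| := by
      intro x y
      have h := key_opp hg (hmem' x) (hmem' y)
      have h2 := abs_add_abs_of_mul_nonpos h
      rw [← hiso x y, h2]
      congr 1
      simp only [hD]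
      ring
    have hD0 : D 0 = 0 := by simp [hD, h0]
    have hDabs : ∀ s, |D s| = |s| := by
      intro s
      have := hDiso s 0
      simpa [hD0] using this
    have hDpos : ∀ s, 0 < s → D s = s := by
      intro s hs
      have h1 := hDabs s
      have h2 : 0 < D s := sub_pos.2 (hpos s hs)
      rw [abs_of_pos h2, abs_of_pos hs] at h1
      exact h1
    have hDeq : ∀ s, D s = s := by
      intro s
      rcases lt_trichotomy 0 s with h | h | h
      · exact hDpos s h
      · rw [← h]; exact hD0
      · -- s < 0
        rcases abs_eq_abs.1 (hDabs s) with heq | heq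
        · exact heq
        · exfalso
          have h1 : D 1 = 1 := hDpos 1 one_pos
          have h2 := hDiso s 1
          rw [heq, h1] at h2
          rcases abs_eq_abs.1 h2 with h3 | h3 <;> linarith
    funext t
    exact key_unique hg (hmem' t) (hmem t) (by simp [hm]; exact hDeq t)
end

section
/- Symmetry of multi-path last passage values: for any environment M : ℤ² → ℝ (max-plus algebra) and any box u ∈ ℤ⁴↑ with k ≤ min(u⁺₁ − u⁻₁ + 1, u⁺₂ − u⁻₂ + 1), the multi-point last passage value with horizontally shifted endpoints equals the one with vertically shifted endpoints: Z_M(u^k) = Z_M(û^k), where u^k = ((u⁻; u⁺ − (k−1, 0)), ..., (u⁻ + (k−1, 0); u⁺)) and û^k = ((u⁻; u⁺ − (0, k−1)), ..., (u⁻ + (0, k−1); u⁺)). -/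
/-- One step of an up-right path: increase exactly one coordinate by 1. -/
def UpStep (a b : ℤ × ℤ) : Prop := b = (a.1 + 1, a.2) ∨ b = (a.1, a.2 + 1)

/-- `IsPath p x y` : `p` is an up-right lattice path from `x` to `y`. -/
def IsPath (p : List (ℤ × ℤ)) (x y : ℤ × ℤ) : Prop :=
  p.head? = some x ∧ p.getLast? = some y ∧ p.Chain' UpStep

/-- The weight of a path in the environment `M`. -/
noncomputable def pathWeight (M : ℤ × ℤ → ℝ) (p : List (ℤ × ℤ)) : ℝ := (p.map M).sum

/-- The endpoint tuple `u^k`: the `i`-th pair (0-indexed) is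
`(u⁻ + (i, 0); u⁺ - (k - 1 - i, 0))`. -/
def ukEnds (u : (ℤ × ℤ) × (ℤ × ℤ)) (k : ℕ) (i : Fin k) : (ℤ × ℤ) × (ℤ × ℤ) :=
  ((u.1.1 + (i : ℤ), u.1.2), (u.2.1 - ((k : ℤ) - 1 - (i : ℤ)), u.2.2))

/-- The multi-point last passage value `Z_M(e)` for a `k`-tuple of endpoint pairs `e`:
the supremum over `k`-tuples of pairwise disjoint up-right paths with the prescribed
endpoints of the total weight. -/
noncomputable def ZMulti (M : ℤ × ℤ → ℝ) (k : ℕ)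
    (e : Fin k → (ℤ × ℤ) × (ℤ × ℤ)) : ℝ :=
  sSup {w | ∃ π : Fin k → List (ℤ × ℤ),
    (∀ i, IsPath (π i) (e i).1 (e i).2) ∧
    (∀ i j, i ≠ j → ∀ x ∈ π i, x ∉ π j) ∧
    w = ∑ i, pathWeight M (π i)}

/-- The endpoint tuple `û^k`, with start and end points shifted vertically. -/
def hatukEnds (u : (ℤ × ℤ) × (ℤ × ℤ)) (k : ℕ) (i : Fin k) : (ℤ × ℤ) × (ℤ × ℤ) :=
  ((u.1.1, u.1.2 + (i : ℤ)), (u.2.1, u.2.2 - ((k : ℤ) - 1 - (i : ℤ))))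

/-!
In a family of disjoint up-right paths from `(a, b), (a + 1, b), …, (a + k - 1, b)` whose end
points lie high enough, the `i`-th path must climb straight up to the corner
`(a + i, b + k - 1 - i)`: a step to the right would land on path `i + 1`, which is still climbing.
These vertical pieces tile the triangle `{(a + s, b + t) | s + t ≤ k - 2}`, and so do the
horizontal pieces from `(a, b + k - 1 - i)` to the same corners. Exchanging them moves the start
points from the bottom edge to the left edge without changing the total weight. The point
reflection `q ↦ -q` reverses paths and turns this surgery into one moving the end points from the
top edge to the right edge, so every weight attained for `u^k` is attained for `û^k`;
transposing the lattice gives the converse.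
-/

theorem UpStep.le {x y : ℤ × ℤ} (h : UpStep x y) : x ≤ y := by
  rcases h with rfl | rfl <;> constructor <;> simp

theorem IsPath.head_mem {p : List (ℤ × ℤ)} {x y : ℤ × ℤ} (hp : IsPath p x y) : x ∈ p :=
  List.mem_of_mem_head? hp.1

theorem IsPath.cons {p : List (ℤ × ℤ)} {x y z : ℤ × ℤ} (hp : IsPath p y z) (hxy : UpStep x y) :
    IsPath (x :: p) x z := by
  obtain ⟨t, rfl⟩ : ∃ t, p = y :: t := List.head?_eq_some_iff.1 hp.1
  exact ⟨rfl, by simpa using hp.2.1, List.isChain_cons_cons.2 ⟨hxy, hp.2.2⟩⟩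

theorem IsPath.eq_cons_of_ne {p : List (ℤ × ℤ)} {x z : ℤ × ℤ} (hp : IsPath p x z) (hxz : x ≠ z) :
    ∃ q, p = x :: q ∧ (IsPath q (x.1 + 1, x.2) z ∨ IsPath q (x.1, x.2 + 1) z) := by
  obtain ⟨hhead, hlast, hchain⟩ := hp
  obtain ⟨t, rfl⟩ := List.head?_eq_some_iff.1 hhead
  cases t with
  | nil => exact absurd (by simpa using hlast) hxz
  | cons y s =>
    obtain ⟨hxy, hs⟩ := List.isChain_cons_cons.1 hchain
    have hys : IsPath (y :: s) y z := ⟨rfl, by simpa using hlast, hs⟩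
    refine ⟨y :: s, rfl, ?_⟩
    rcases hxy with rfl | rfl
    exacts [Or.inl hys, Or.inr hys]

theorem IsPath.le_of_mem {p : List (ℤ × ℤ)} {x y q : ℤ × ℤ} (hp : IsPath p x y) (hq : q ∈ p) :
    x ≤ q := by
  obtain ⟨t, rfl⟩ := List.head?_eq_some_iff.1 hp.1
  have hsorted : (x :: t).Pairwise (· ≤ ·) :=
    List.isChain_iff_pairwise.1 (hp.2.2.imp fun _ _ h => UpStep.le h)
  rcases List.mem_cons.1 hq with rfl | hq
  exacts [le_rfl, List.rel_of_pairwise_cons hsorted hq]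

theorem IsPath.map_swap {p : List (ℤ × ℤ)} {x y : ℤ × ℤ} (hp : IsPath p x y) :
    IsPath (p.map Prod.swap) x.swap y.swap := by
  refine ⟨by simp [hp.1], by simp [hp.2.1], (List.isChain_map _).2 (hp.2.2.imp ?_)⟩
  rintro a b (rfl | rfl)
  exacts [Or.inr rfl, Or.inl rfl]

theorem IsPath.neg_reverse {p : List (ℤ × ℤ)} {x y : ℤ × ℤ} (hp : IsPath p x y) :
    IsPath (p.map Neg.neg).reverse (-y) (-x) := by
  refine ⟨by simp [hp.2.1], by simp [hp.1], ?_⟩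
  refine List.isChain_reverse.2 ((List.isChain_map _).2 (hp.2.2.imp ?_))
  rintro a b (rfl | rfl)
  · exact Or.inl (by ext <;> simp)
  · exact Or.inr (by ext <;> simp)

namespace LastPassage

open Finset

def rowSegment (x : ℤ × ℤ) (n : ℕ) : List (ℤ × ℤ) :=
  (List.range n).map fun t : ℕ => (x.1 + t, x.2)

def columnSegment (x : ℤ × ℤ) (n : ℕ) : List (ℤ × ℤ) :=
  (List.range n).map fun t : ℕ => (x.1, x.2 + t)

theorem rowSegment_succ (x : ℤ × ℤ) (n : ℕ) :
    rowSegment x (n + 1) = x :: rowSegment (x.1 + 1, x.2) n := by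
  rw [rowSegment, rowSegment, List.range_succ_eq_map, List.map_cons, List.map_map]
  congr 1
  · simp
  · congr 1 with t <;> simp only [Function.comp_apply, Nat.cast_succ]; ring

theorem columnSegment_succ (x : ℤ × ℤ) (n : ℕ) :
    columnSegment x (n + 1) = columnSegment x n ++ [(x.1, x.2 + n)] := by
  simp [columnSegment, List.range_succ]

theorem mem_rowSegment {x q : ℤ × ℤ} {n : ℕ} :
    q ∈ rowSegment x n ↔ ∃ t < n, (x.1 + t, x.2) = q := by
  simp [rowSegment]

theorem isPath_rowSegment_append {p : List (ℤ × ℤ)} {x y : ℤ × ℤ} {n : ℕ}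
    (hp : IsPath p (x.1 + n, x.2) y) : IsPath (rowSegment x n ++ p) x y := by
  induction n generalizing x with
  | zero => simpa [rowSegment] using hp
  | succ n ih =>
    rw [rowSegment_succ, List.cons_append]
    refine IsPath.cons (ih ?_) (Or.inl rfl)
    convert hp using 2
    push_cast
    ring

theorem pathWeight_append (M : ℤ × ℤ → ℝ) (p q : List (ℤ × ℤ)) :
    pathWeight M (p ++ q) = pathWeight M p + pathWeight M q := by
  simp [pathWeight]

theorem pathWeight_map_range (M : ℤ × ℤ → ℝ) (f : ℕ → ℤ × ℤ) (n : ℕ) :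
    pathWeight M ((List.range n).map f) = ∑ t ∈ range n, M (f t) := by
  simp [pathWeight, Finset.sum, Finset.range, Multiset.range, Function.comp_def]

theorem sum_triangle {β : Type*} [AddCommMonoid β] (k : ℕ) (f : ℕ → ℕ → β) :
    ∑ i : Fin k, ∑ t ∈ range (k - 1 - i), f i t =
      ∑ i : Fin k, ∑ t ∈ range i, f t (k - 1 - i) := by
  rw [Fin.sum_univ_eq_sum_range (fun i => ∑ t ∈ range (k - 1 - i), f i t),
    Fin.sum_univ_eq_sum_range (fun i => ∑ t ∈ range i, f t (k - 1 - i)),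
    ← sum_range_reflect (fun i => ∑ t ∈ range i, f t (k - 1 - i))]
  calc _ = ∑ t ∈ range k, ∑ i ∈ range (k - 1 - t), f i t :=
        sum_comm' fun i t => by simp only [mem_range]; omega
    _ = _ := sum_congr rfl fun t ht => by rw [Nat.sub_sub_self (by simp at ht; omega)]

theorem exists_eq_columnSegment_append {k : ℕ} {a b : ℤ} {y : Fin k → ℤ × ℤ}
    {π : Fin k → List (ℤ × ℤ)}
    (hπ : ∀ i, IsPath (π i) (a + i, b) (y i)) (hy : ∀ i : Fin k, b + (k - 1 - i) ≤ (y i).2)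
    (hdisj : ∀ i j, i ≠ j → ∀ x ∈ π i, x ∉ π j) (j : ℕ) :
    ∀ i : Fin k, i + j < k →
      ∃ R, π i = columnSegment (a + i, b) j ++ R ∧ IsPath R (a + i, b + j) (y i) := by
  induction j with
  | zero => exact fun i _ => ⟨π i, by simp [columnSegment], by simpa using hπ i⟩
  | succ j ih =>
    intro i hij
    obtain ⟨R, hR, hRpath⟩ := ih i (by omega)
    have hne : (a + i, b + j) ≠ y i := fun h => by
      have := hy i
      rw [← h] at this
      omega
    obtain ⟨q, rfl, hq | hq⟩ := IsPath.eq_cons_of_ne hRpath hne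
    · exfalso
      obtain ⟨R', hR', hR'path⟩ := ih ⟨i + 1, by omega⟩ (by dsimp only; omega)
      refine hdisj i ⟨i + 1, by omega⟩ (by simp [Fin.ext_iff]) (a + i + 1, b + j) ?_ ?_
      · rw [hR]
        exact List.mem_append_right _ (List.mem_cons_of_mem _ (IsPath.head_mem hq))
      · rw [hR']
        refine List.mem_append_right _ ?_
        convert IsPath.head_mem hR'path using 2
        push_cast
        ring
    · refine ⟨q, by rw [hR, columnSegment_succ]; simp, ?_⟩
      convert hq using 2
      push_cast
      ring

def tupleWeights (M : ℤ × ℤ → ℝ) (k : ℕ) (e : Fin k → (ℤ × ℤ) × (ℤ × ℤ)) : Set ℝ :=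
  {w | ∃ π : Fin k → List (ℤ × ℤ),
    (∀ i, IsPath (π i) (e i).1 (e i).2) ∧
    (∀ i j, i ≠ j → ∀ x ∈ π i, x ∉ π j) ∧
    w = ∑ i, pathWeight M (π i)}

theorem ZMulti_eq_sSup_tupleWeights (M : ℤ × ℤ → ℝ) (k : ℕ) (e : Fin k → (ℤ × ℤ) × (ℤ × ℤ)) :
    ZMulti M k e = sSup (tupleWeights M k e) := rfl

theorem tupleWeights_subset_comp_perm (M : ℤ × ℤ → ℝ) (k : ℕ)
    (e : Fin k → (ℤ × ℤ) × (ℤ × ℤ)) (σ : Equiv.Perm (Fin k)) :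
    tupleWeights M k e ⊆ tupleWeights M k (e ∘ σ) := by
  rintro w ⟨π, hπ, hdisj, rfl⟩
  refine ⟨π ∘ σ, fun i => hπ (σ i), fun i j hij => hdisj _ _ (σ.injective.ne hij), ?_⟩
  exact (Equiv.sum_comp σ fun i => pathWeight M (π i)).symm

theorem tupleWeights_subset_swap (M : ℤ × ℤ → ℝ) (k : ℕ) (e : Fin k → (ℤ × ℤ) × (ℤ × ℤ)) :
    tupleWeights M k e ⊆
      tupleWeights (M ∘ Prod.swap) k fun i => ((e i).1.swap, (e i).2.swap) := by
  rintro w ⟨π, hπ, hdisj, rfl⟩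
  refine ⟨fun i => (π i).map Prod.swap, fun i => (hπ i).map_swap, fun i j hij x hi hj => ?_, ?_⟩
  · obtain ⟨q, hq, rfl⟩ := List.mem_map.1 hi
    exact hdisj i j hij q hq ((List.mem_map_of_injective Prod.swap_injective).1 hj)
  · simp [pathWeight, Function.comp_def]

theorem tupleWeights_subset_neg (M : ℤ × ℤ → ℝ) (k : ℕ) (e : Fin k → (ℤ × ℤ) × (ℤ × ℤ)) :
    tupleWeights M k e ⊆ tupleWeights (fun q => M (-q)) k fun i => (-(e i).2, -(e i).1) := by
  rintro w ⟨π, hπ, hdisj, rfl⟩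
  refine ⟨fun i => ((π i).map Neg.neg).reverse, fun i => (hπ i).neg_reverse,
    fun i j hij x hi hj => ?_, ?_⟩
  · rw [List.mem_reverse] at hi hj
    obtain ⟨q, hq, rfl⟩ := List.mem_map.1 hi
    exact hdisj i j hij q hq ((List.mem_map_of_injective neg_injective).1 hj)
  · simp [pathWeight, Function.comp_def]

theorem tupleWeights_bottom_subset_left (M : ℤ × ℤ → ℝ) {k : ℕ} (a b : ℤ) (y : Fin k → ℤ × ℤ)
    (hy : ∀ i : Fin k, b + (k - 1 - i) ≤ (y i).2) :
    tupleWeights M k (fun i => ((a + i, b), y i)) ⊆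
      tupleWeights M k (fun i => ((a, b + (k - 1 - i)), y i)) := by
  rintro w ⟨π, hπ, hdisj, rfl⟩
  have hcast : ∀ i : Fin k, ((k - 1 - i : ℕ) : ℤ) = k - 1 - i := fun i => by omega
  choose R hR hRpath using fun i : Fin k =>
    exists_eq_columnSegment_append hπ hy hdisj (k - 1 - i) i (by omega)
  simp only [hcast] at hRpath
  refine ⟨fun i => rowSegment (a, b + (k - 1 - i)) i ++ R i,
    fun i => isPath_rowSegment_append (hRpath i), ?_, ?_⟩
  · have hmem : ∀ (i : Fin k) q, q ∈ rowSegment (a, b + (k - 1 - i)) i ++ R i →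
        (q.1 < a + i ∧ q.2 = b + (k - 1 - i)) ∨
          (q ∈ π i ∧ a + i ≤ q.1 ∧ b + (k - 1 - i) ≤ q.2) := by
      intro i q hq
      rcases List.mem_append.1 hq with hq | hq
      · obtain ⟨t, ht, rfl⟩ := mem_rowSegment.1 hq
        exact Or.inl ⟨by simpa using ht, rfl⟩
      · rw [hR i]
        exact Or.inr ⟨List.mem_append_right _ hq, (hRpath i).le_of_mem hq⟩
    intro i j hij q hi hj
    have hij' : (i : ℤ) ≠ j := fun h => hij (Fin.ext (by exact_mod_cast h))
    -- a horizontal prefix lies strictly below the antidiagonal through the corners, the rest above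
    rcases hmem i q hi with ⟨h1, h2⟩ | ⟨h1, h2, h3⟩ <;>
      rcases hmem j q hj with ⟨h4, h5⟩ | ⟨h4, h5, h6⟩
    · omega
    · omega
    · omega
    · exact hdisj i j hij q h1 h4
  · simp only [hR, pathWeight_append, sum_add_distrib, rowSegment, columnSegment,
      pathWeight_map_range]
    congr 1
    simpa [hcast] using sum_triangle k fun x y => M (a + x, b + y)

theorem tupleWeights_top_subset_right (M : ℤ × ℤ → ℝ) {k : ℕ} (c d : ℤ) (x : Fin k → ℤ × ℤ)
    (hx : ∀ i : Fin k, (x i).2 ≤ d - i) :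
    tupleWeights M k (fun i => (x i, (c - (k - 1 - i), d))) ⊆
      tupleWeights M k (fun i => (x i, (c, d - i))) := by
  intro w hw
  have h1 := tupleWeights_subset_comp_perm _ k _ Fin.revPerm (tupleWeights_subset_neg M k _ hw)
  have h2 := tupleWeights_bottom_subset_left (fun q => M (-q)) (-c) (-d) (fun i => -x i.rev)
    (fun i => by have := hx i.rev; simp only [Prod.snd_neg, Fin.val_rev] at this ⊢; omega)
    (by
      convert h1 using 2
      funext i
      simp only [Function.comp_apply, Fin.revPerm_apply, Fin.val_rev, Prod.neg_mk, Prod.mk.injEq,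
        and_true]
      omega)
  have h3 := tupleWeights_subset_neg _ k _ (tupleWeights_subset_comp_perm _ k _ Fin.revPerm h2)
  convert h3 using 2
  · simp
  · funext i
    simp only [Function.comp_apply, Fin.revPerm_apply, Fin.val_rev, Fin.rev_rev, neg_neg,
      Prod.neg_mk, Prod.mk.injEq, true_and]
    omega

theorem tupleWeights_ukEnds_subset_hatukEnds (M : ℤ × ℤ → ℝ) (u : (ℤ × ℤ) × (ℤ × ℤ)) (k : ℕ)
    (hk : (k : ℤ) ≤ u.2.2 - u.1.2 + 1) :
    tupleWeights M k (ukEnds u k) ⊆ tupleWeights M k (hatukEnds u k) := by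
  obtain ⟨⟨a, b⟩, c, d⟩ := u
  intro w hw
  have h1 := tupleWeights_bottom_subset_left M a b (fun i => (c - (k - 1 - i), d))
    (fun i => by dsimp at hk ⊢; omega) hw
  have h2 := tupleWeights_top_subset_right M c d (fun i => (a, b + (k - 1 - i)))
    (fun i => by dsimp at hk ⊢; omega) h1
  convert tupleWeights_subset_comp_perm M k _ Fin.revPerm h2 using 2
  funext i
  simp only [hatukEnds, Function.comp_apply, Fin.revPerm_apply, Fin.val_rev, Prod.mk.injEq,
    true_and]
  dsimp only at hk
  omega

end LastPassage

open LastPassage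

theorem ZMulti_uk_eq_hatuk_general (M : ℤ × ℤ → ℝ)
    (u : (ℤ × ℤ) × (ℤ × ℤ)) (k : ℕ)
    (hk : (k : ℤ) ≤ min (u.2.1 - u.1.1 + 1) (u.2.2 - u.1.2 + 1)) :
    ZMulti M k (ukEnds u k) = ZMulti M k (hatukEnds u k) := by
  obtain ⟨hk₁, hk₂⟩ := le_min_iff.1 hk
  rw [ZMulti_eq_sSup_tupleWeights, ZMulti_eq_sSup_tupleWeights]
  refine congrArg sSup ((tupleWeights_ukEnds_subset_hatukEnds M u k hk₂).antisymm fun w hw => ?_)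
  exact tupleWeights_subset_swap _ k _ <|
    tupleWeights_ukEnds_subset_hatukEnds (M ∘ Prod.swap) ((u.1.2, u.1.1), (u.2.2, u.2.1)) k hk₁ <|
      tupleWeights_subset_swap M k _ hw

/-- `Z_M(u^k) = Z_M(û^k)`: multi-point last passage values with horizontally shifted
endpoints equal those with vertically shifted endpoints. -/
theorem ZMulti_uk_eq_hatuk (M : ℤ × ℤ → ℝ)
    (u : (ℤ × ℤ) × (ℤ × ℤ)) (hu : IsBox u) (k : ℕ)
    (hk : (k : ℤ) ≤ min (u.2.1 - u.1.1 + 1) (u.2.2 - u.1.2 + 1)) :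
    ZMulti M k (ukEnds u k) = ZMulti M k (hatukEnds u k) :=
  ZMulti_uk_eq_hatuk_general M u k hk
end

section
/- Size of image partitions under the diagonal map: let M : ℤ² → ℤ≥0 be an environment with nonnegative integer weights, u ∈ ℤ⁴↑ a box, and assume the increments Z^{Δk}_M(u) = Z_M(u^k) − Z_M(u^{k−1}) are nonincreasing in k (so Z^Δ_M(u) is a partition). Then the size of the partition Z^Δ_M(u) for k_max = min(u⁺₁ − u⁻₁ + 1, u⁺₂ − u⁻₂ + 1) equals the total weight: |Z^Δ_M(u)| = Σ_{k=1}^{k_max} Z^{Δk}_M(u) = Z_M(u^{k_max}) = Σ_{x ∈ u} M_x when k_max = u⁺₂ − u⁻₂ + 1 ≤ u⁺₁ − u⁻₁ + 1 (i.e. when the box is at least as wide as it is tall, the maximal disjoint path family covers every point of the box, so the maximal multi-point last passage value is the full sum of weights over the box). -/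
/-!
The upper bound `Z_M(u^k) ≤ Σ_{x ∈ u} M_x` holds because the `k` disjoint paths stay inside
the box and the weights are nonnegative. For the lower bound, when `k` is the height of `u`
and the box is at least as wide as tall, the `i`-th path can be taken to be a hook: it climbs
the column `u⁻₁ + i` up to row `k - 1 - i`, runs right along that row to the column
`u⁺₁ - (k - 1 - i)`, and climbs that column to the top. These hooks tile the box. The sum of
the increments telescopes to `Z_M(u^k) - Z_M(u⁰) = Z_M(u^k)`.
-/

open Finset

lemma sum_Icc_one_sub_telescope (F : ℕ → ℝ) (n : ℕ) :
    ∑ l ∈ Icc 1 n, (F l - F (l - 1)) = F n - F 0 := by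
  rw [← Ico_add_one_right_eq_Icc, sum_Ico_eq_sum_range]
  simpa [add_comm] using sum_range_sub F n

lemma boxSet_eq_Icc (u : (ℤ × ℤ) × (ℤ × ℤ)) : boxSet u = Set.Icc u.1 u.2 := by
  ext p
  simp only [boxSet, Set.mem_ofPred_eq, Set.mem_Icc, Prod.le_def]
  tauto

lemma Icc_ukEnds_subset (u : (ℤ × ℤ) × (ℤ × ℤ)) {k : ℕ} (i : Fin k) :
    Set.Icc (ukEnds u k i).1 (ukEnds u k i).2 ⊆ Set.Icc u.1 u.2 := by
  have := i.isLt
  refine Set.Icc_subset_Icc ?_ ?_ <;> simp only [ukEnds, Prod.le_def] <;> omega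

lemma UpStep.lt {a b : ℤ × ℤ} (h : UpStep a b) : a < b := by
  rcases h with rfl | rfl <;> simp [Prod.lt_iff]

namespace IsPath

variable {p : List (ℤ × ℤ)} {x y : ℤ × ℤ}

lemma pairwise_lt (hp : IsPath p x y) : p.Pairwise (· < ·) :=
  List.isChain_iff_pairwise.1 (hp.2.2.imp fun _ _ => UpStep.lt)

lemma nodup (hp : IsPath p x y) : p.Nodup := hp.pairwise_lt.nodup

lemma mem_Icc (hp : IsPath p x y) {z : ℤ × ℤ} (hz : z ∈ p) : z ∈ Set.Icc x y := by
  have hle : p.Pairwise (· ≤ ·) := hp.pairwise_lt.imp le_of_lt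
  have hne := List.ne_nil_of_mem hz
  obtain ⟨hx, hy, -⟩ := hp
  constructor
  · rw [← (List.head_eq_iff_head?_eq_some hne).2 hx]
    exact hle.rel_head hz
  · rw [← List.getLast_of_mem_getLast? hy]
    exact hle.rel_getLast hz

end IsPath

lemma isPath_map_range (γ : ℕ → ℤ × ℤ) (n : ℕ) (hγ : ∀ t < n, UpStep (γ t) (γ (t + 1))) :
    IsPath ((List.range (n + 1)).map γ) (γ 0) (γ n) := by
  refine ⟨by simp [List.range_succ_eq_map], by simp [List.range_succ], ?_⟩
  exact (List.isChain_map γ).2 ((List.isChain_range_succ _ n).2 hγ)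

def IsDisjointPathFamily {k : ℕ} (e : Fin k → (ℤ × ℤ) × (ℤ × ℤ))
    (π : Fin k → List (ℤ × ℤ)) : Prop :=
  (∀ i, IsPath (π i) (e i).1 (e i).2) ∧ (∀ i j, i ≠ j → ∀ x ∈ π i, x ∉ π j)

namespace IsDisjointPathFamily

variable {k : ℕ} {e : Fin k → (ℤ × ℤ) × (ℤ × ℤ)} {π : Fin k → List (ℤ × ℤ)}

lemma sum_pathWeight (hπ : IsDisjointPathFamily e π) (f : ℤ × ℤ → ℝ) :
    ∑ i, pathWeight f (π i) = ∑ x ∈ univ.biUnion (fun i => (π i).toFinset), f x := by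
  rw [sum_biUnion]
  · exact sum_congr rfl fun i _ => (List.sum_toFinset f (hπ.1 i).nodup).symm
  · intro i _ j _ hij
    exact disjoint_left.2 fun x hxi hxj =>
      hπ.2 i j hij x (List.mem_toFinset.1 hxi) (List.mem_toFinset.1 hxj)

lemma sum_pathWeight_le (hπ : IsDisjointPathFamily e π) {f : ℤ × ℤ → ℝ} (hf : 0 ≤ f)
    {lo hi : ℤ × ℤ} (he : ∀ i, Set.Icc (e i).1 (e i).2 ⊆ Set.Icc lo hi) :
    ∑ i, pathWeight f (π i) ≤ ∑ x ∈ Icc lo hi, f x := by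
  rw [hπ.sum_pathWeight]
  refine sum_le_sum_of_subset_of_nonneg ?_ fun x _ _ => hf x
  intro x hx
  obtain ⟨i, -, hxi⟩ := mem_biUnion.1 hx
  exact mem_Icc.2 (he i ((hπ.1 i).mem_Icc (List.mem_toFinset.1 hxi)))

end IsDisjointPathFamily

lemma ZMulti_eq_of_isGreatest {f : ℤ × ℤ → ℝ} {k : ℕ} {e : Fin k → (ℤ × ℤ) × (ℤ × ℤ)} {B : ℝ}
    (hle : ∀ π, IsDisjointPathFamily e π → ∑ i, pathWeight f (π i) ≤ B)
    (hex : ∃ π, IsDisjointPathFamily e π ∧ ∑ i, pathWeight f (π i) = B) :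
    ZMulti f k e = B := by
  refine IsGreatest.csSup_eq ⟨?_, ?_⟩
  · obtain ⟨π, hπ, rfl⟩ := hex
    exact ⟨π, hπ.1, hπ.2, rfl⟩
  · rintro _ ⟨π, hpath, hdisj, rfl⟩
    exact hle π ⟨hpath, hdisj⟩

lemma ZMulti_zero (f : ℤ × ℤ → ℝ) (e : Fin 0 → (ℤ × ℤ) × (ℤ × ℤ)) : ZMulti f 0 e = 0 :=
  ZMulti_eq_of_isGreatest (fun _ _ => by simp)
    ⟨Fin.elim0, ⟨fun i => i.elim0, fun i => i.elim0⟩, by simp⟩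

section Hooks

variable {u : (ℤ × ℤ) × (ℤ × ℤ)} {k : ℕ}

/-- The `t`-th point of the `i`-th hook in the box `u` with `k` rows: after `k - 1 - i` steps up
it takes `u⁺₁ - u⁻₁ + 1 - k` steps right, and then goes up again. -/
def hook (u : (ℤ × ℤ) × (ℤ × ℤ)) (k i t : ℕ) : ℤ × ℤ :=
  (u.1.1 + i + min (max ((t : ℤ) - (k - 1 - i)) 0) (u.2.1 - u.1.1 + 1 - k),
   u.1.2 + min (t : ℤ) (k - 1 - i) + max ((t : ℤ) - (k - 1 - i) - (u.2.1 - u.1.1 + 1 - k)) 0)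

def hookPath (u : (ℤ × ℤ) × (ℤ × ℤ)) (k i : ℕ) : List (ℤ × ℤ) :=
  (List.range ((u.2.1 - u.1.1).toNat + 1)).map (hook u k i)

lemma upStep_hook (hw : (k : ℤ) ≤ u.2.1 - u.1.1 + 1) (i t : ℕ) :
    UpStep (hook u k i t) (hook u k i (t + 1)) := by
  simp only [UpStep, hook, Prod.ext_iff]
  push_cast
  omega

lemma hook_zero (hw : (k : ℤ) ≤ u.2.1 - u.1.1 + 1) {i : ℕ} (hi : i < k) :
    hook u k i 0 = (u.1.1 + i, u.1.2) := by
  simp only [hook, Prod.ext_iff]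
  omega

lemma hook_last (hk : (k : ℤ) = u.2.2 - u.1.2 + 1) (hw : (k : ℤ) ≤ u.2.1 - u.1.1 + 1) {i : ℕ}
    (hi : i < k) : hook u k i (u.2.1 - u.1.1).toNat = (u.2.1 - (k - 1 - i), u.2.2) := by
  simp only [hook, Prod.ext_iff]
  omega

lemma eq_of_hook_eq {i i' t t' : ℕ} (h : hook u k i t = hook u k i' t') : i = i' := by
  simp only [hook, Prod.ext_iff] at h
  omega

/-- The hook through `z` has index `z₁ - u⁻₁ - c`, where `c` is `z₁ - u⁻₁ + z₂ - u⁻₂ - (k - 1)`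
clamped to `[0, u⁺₁ - u⁻₁ + 1 - k]`; every step raises `z₁ + z₂` by one, which fixes `t`. -/
lemma exists_hook_eq (hk : (k : ℤ) = u.2.2 - u.1.2 + 1) (hw : (k : ℤ) ≤ u.2.1 - u.1.1 + 1)
    {z : ℤ × ℤ} (hz : z ∈ Set.Icc u.1 u.2) :
    ∃ i < k, ∃ t ≤ (u.2.1 - u.1.1).toNat, hook u k i t = z := by
  obtain ⟨⟨h1, h2⟩, h3, h4⟩ := hz
  set X := z.1 - u.1.1
  set j := z.2 - u.1.2
  set i : ℤ := X - min (max (X + j - (k - 1)) 0) (u.2.1 - u.1.1 + 1 - k)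
  refine ⟨i.toNat, by omega, (X + j - i).toNat, by omega, ?_⟩
  simp only [hook, Prod.ext_iff]
  omega

lemma isDisjointPathFamily_hookPath (hk : (k : ℤ) = u.2.2 - u.1.2 + 1)
    (hw : (k : ℤ) ≤ u.2.1 - u.1.1 + 1) :
    IsDisjointPathFamily (ukEnds u k) (fun i => hookPath u k i) := by
  refine ⟨fun i => ?_, fun i j hij x hxi hxj => ?_⟩
  · have hpath := isPath_map_range (hook u k i) (u.2.1 - u.1.1).toNat
      fun t _ => upStep_hook hw i t
    rwa [hook_zero hw i.isLt, hook_last hk hw i.isLt] at hpath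
  · obtain ⟨t, -, rfl⟩ := List.mem_map.1 hxi
    obtain ⟨t', -, h⟩ := List.mem_map.1 hxj
    exact hij (Fin.ext (eq_of_hook_eq h).symm)

lemma biUnion_hookPath (hk : (k : ℤ) = u.2.2 - u.1.2 + 1) (hw : (k : ℤ) ≤ u.2.1 - u.1.1 + 1) :
    univ.biUnion (fun i : Fin k => (hookPath u k i).toFinset) = Icc u.1 u.2 := by
  ext z
  simp only [mem_biUnion, mem_univ, true_and, List.mem_toFinset, hookPath, List.mem_map,
    List.mem_range, Nat.lt_succ_iff, mem_Icc]
  constructor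
  · rintro ⟨i, t, ht, rfl⟩
    exact Icc_ukEnds_subset u i (((isDisjointPathFamily_hookPath hk hw).1 i).mem_Icc
      (List.mem_map_of_mem (List.mem_range.2 (Nat.lt_succ_of_le ht))))
  · intro hz
    obtain ⟨i, hi, t, ht, rfl⟩ := exists_hook_eq hk hw hz
    exact ⟨⟨i, hi⟩, t, ht, rfl⟩

end Hooks

theorem ZMulti_ukEnds_eq_sum_Icc {f : ℤ × ℤ → ℝ} (hf : 0 ≤ f) {u : (ℤ × ℤ) × (ℤ × ℤ)} {k : ℕ}
    (hk : (k : ℤ) = u.2.2 - u.1.2 + 1) (hw : (k : ℤ) ≤ u.2.1 - u.1.1 + 1) :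
    ZMulti f k (ukEnds u k) = ∑ x ∈ Icc u.1 u.2, f x := by
  have hhooks := isDisjointPathFamily_hookPath hk hw
  refine ZMulti_eq_of_isGreatest (fun _ hπ => hπ.sum_pathWeight_le hf (Icc_ukEnds_subset u))
    ⟨_, hhooks, ?_⟩
  rw [hhooks.sum_pathWeight, biUnion_hookPath hk hw]

theorem ZDelta_partition_size_general (M : ℤ × ℤ → ℕ) (u : (ℤ × ℤ) × (ℤ × ℤ)) (hu : IsBox u)
    (hwide : u.2.2 - u.1.2 ≤ u.2.1 - u.1.1) :
    (∑ l ∈ Finset.Icc 1 (u.2.2 - u.1.2 + 1).toNat,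
        (ZMulti (fun x => (M x : ℝ)) l (ukEnds u l)
          - ZMulti (fun x => (M x : ℝ)) (l - 1) (ukEnds u (l - 1))))
      = ZMulti (fun x => (M x : ℝ)) (u.2.2 - u.1.2 + 1).toNat
          (ukEnds u (u.2.2 - u.1.2 + 1).toNat) ∧
    ZMulti (fun x => (M x : ℝ)) (u.2.2 - u.1.2 + 1).toNat
        (ukEnds u (u.2.2 - u.1.2 + 1).toNat)
      = ∑ᶠ x ∈ boxSet u, (M x : ℝ) := by
  set k := (u.2.2 - u.1.2 + 1).toNat
  have hk : (k : ℤ) = u.2.2 - u.1.2 + 1 := Int.toNat_of_nonneg (by linarith [hu.2])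
  refine ⟨?_, ?_⟩
  · rw [sum_Icc_one_sub_telescope (fun l => ZMulti (fun x => (M x : ℝ)) l (ukEnds u l)),
      ZMulti_zero, sub_zero]
  · rw [ZMulti_ukEnds_eq_sum_Icc (fun x => Nat.cast_nonneg (M x)) hk (by omega), boxSet_eq_Icc,
      ← coe_Icc, finsum_mem_coe_finset]

/-- For nonnegative integer weights on a box that is at least as wide as it is tall,
with `k_max` equal to the height of the box, the size of the partition `Z^Δ_M(u)`
(the telescoping sum of the increments) equals `Z_M(u^{k_max})`, which equals the
total weight of the box. -/
theorem ZDelta_partition_size (M : ℤ × ℤ → ℕ) (u : (ℤ × ℤ) × (ℤ × ℤ)) (hu : IsBox u)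
    (hwide : u.2.2 - u.1.2 ≤ u.2.1 - u.1.1)
    (hmono : ∀ l : ℕ, 2 ≤ l → (l : ℤ) ≤ u.2.2 - u.1.2 + 1 →
      ZMulti (fun x => (M x : ℝ)) l (ukEnds u l)
          - ZMulti (fun x => (M x : ℝ)) (l - 1) (ukEnds u (l - 1)) ≤
        ZMulti (fun x => (M x : ℝ)) (l - 1) (ukEnds u (l - 1))
          - ZMulti (fun x => (M x : ℝ)) (l - 2) (ukEnds u (l - 2))) :
    (∑ l ∈ Finset.Icc 1 (u.2.2 - u.1.2 + 1).toNat,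
        (ZMulti (fun x => (M x : ℝ)) l (ukEnds u l)
          - ZMulti (fun x => (M x : ℝ)) (l - 1) (ukEnds u (l - 1))))
      = ZMulti (fun x => (M x : ℝ)) (u.2.2 - u.1.2 + 1).toNat
          (ukEnds u (u.2.2 - u.1.2 + 1).toNat) ∧
    ZMulti (fun x => (M x : ℝ)) (u.2.2 - u.1.2 + 1).toNat
        (ukEnds u (u.2.2 - u.1.2 + 1).toNat)
      = ∑ᶠ x ∈ boxSet u, (M x : ℝ) :=
  ZDelta_partition_size_general M u hu hwide
end
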